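/- arXiv:2512.17386 — 7 statements merged into one kernel-verified Lean document; each statement's English description precedes it below -/
import Mathlib

section
/- Let c1, c2, c3 ∈ [0,1] with c1 + c2 + c3 ≤ 1. If there exist y1, y2, y3 ∈ [0,1] such that c1 ≤ y1(1 - y2), c2 ≤ y2(1 - y3), and c3 ≤ y3(1 - y1), then 1 - c1 - c2 - c3 ≥ 2·√(c1·c2·c3). -/
/-- Key inequality in the 'only if' direction of the deterministic Border theorem
for three buyers with constant interim allocations. -/
theorem three_buyer_border_only_if
    (c1 c2 c3 y1 y2 y3 : ℝ)
    (hc1 : c1 ∈ Set.Icc (0:ℝ) 1) (hc2 : c2 ∈ Set.Icc (0:ℝ) 1) (hc3 : c3 ∈ Set.Icc (0:ℝ) 1)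
    (hsum : c1 + c2 + c3 ≤ 1)
    (hy1 : y1 ∈ Set.Icc (0:ℝ) 1) (hy2 : y2 ∈ Set.Icc (0:ℝ) 1) (hy3 : y3 ∈ Set.Icc (0:ℝ) 1)
    (h1 : c1 ≤ y1 * (1 - y2)) (h2 : c2 ≤ y2 * (1 - y3)) (h3 : c3 ≤ y3 * (1 - y1)) :
    1 - c1 - c2 - c3 ≥ 2 * Real.sqrt (c1 * c2 * c3) := by
  obtain ⟨hc10, hc11⟩ := hc1
  obtain ⟨hc20, hc21⟩ := hc2
  obtain ⟨hc30, hc31⟩ := hc3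
  obtain ⟨hy10, hy11⟩ := hy1
  obtain ⟨hy20, hy21⟩ := hy2
  obtain ⟨hy30, hy31⟩ := hy3
  set P := (1 - y1) * (1 - y2) * (1 - y3) with hP
  set Q := y1 * y2 * y3 with hQ
  have hP0 : 0 ≤ P := by
    apply mul_nonneg (mul_nonneg (by linarith) (by linarith)) (by linarith)
  have hQ0 : 0 ≤ Q := mul_nonneg (mul_nonneg hy10 hy20) hy30
  have hprod : c1 * c2 * c3 ≤ P * Q := by
    have h12 : c1 * c2 ≤ (y1 * (1 - y2)) * (y2 * (1 - y3)) :=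
      mul_le_mul h1 h2 hc20 (mul_nonneg hy10 (by linarith))
    have : c1 * c2 * c3 ≤ (y1 * (1 - y2)) * (y2 * (1 - y3)) * (y3 * (1 - y1)) :=
      mul_le_mul h12 h3 hc30
        (mul_nonneg (mul_nonneg hy10 (by linarith)) (mul_nonneg hy20 (by linarith)))
    calc c1 * c2 * c3 ≤ (y1 * (1 - y2)) * (y2 * (1 - y3)) * (y3 * (1 - y1)) := this
      _ = P * Q := by ring
  have hsqrt : Real.sqrt (c1 * c2 * c3) ≤ Real.sqrt (P * Q) := Real.sqrt_le_sqrt hprod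
  have hs : 2 * Real.sqrt (P * Q) ≤ P + Q := by
    have h := Real.sqrt_nonneg (P * Q)
    have hsq : Real.sqrt (P * Q) ^ 2 = P * Q := Real.sq_sqrt (mul_nonneg hP0 hQ0)
    nlinarith [sq_nonneg (P - Q), sq_nonneg (P + Q - 2 * Real.sqrt (P * Q))]
  have hPQ : P + Q ≤ 1 - c1 - c2 - c3 := by nlinarith
  linarith
end

section
/- Let x̂₁, x̂₂ : [0,1] → [0,1] be strictly increasing functions (interim allocations in quantile space for two buyers with uniform quantiles). If there exists a measurable coloring C : [0,1]² → {0,1,2} such that for a.e. q₁, the measure of {q₂ : C(q₁,q₂)=1} equals x̂₁(q₁), for a.e. q₂ the measure of {q₁ : C(q₁,q₂)=2} equals x̂₂(q₂), and C is monotone in the threshold sense (C(q₁,q₂)=1 and q₁' > q₁ implies C(q₁',q₂)=1; C(q₁,q₂)=2 and q₂' > q₂ implies C(q₁,q₂')=2), then x̂₂(x̂₁(q)) ≤ q for all q ∈ [0,1]. -/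
open MeasureTheory

/-- 'Only if' direction of the deterministic Border theorem for two buyers:
a measurable three-coloring of the unit square realizing the interim allocations,
with the threshold monotonicity forced by DSIC, implies `x̂₂(x̂₁(q)) ≤ q`. -/
theorem deterministic_border_only_if
    (x1 x2 : ℝ → ℝ)
    (hx1mono : StrictMonoOn x1 (Set.Icc 0 1))
    (hx2mono : StrictMonoOn x2 (Set.Icc 0 1))
    (hx1maps : ∀ q ∈ Set.Icc (0:ℝ) 1, x1 q ∈ Set.Icc (0:ℝ) 1)
    (hx2maps : ∀ q ∈ Set.Icc (0:ℝ) 1, x2 q ∈ Set.Icc (0:ℝ) 1)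
    (C : ℝ → ℝ → ℕ)
    (hCval : ∀ q1 q2, C q1 q2 = 0 ∨ C q1 q2 = 1 ∨ C q1 q2 = 2)
    (hmeas : Measurable fun p : ℝ × ℝ => C p.1 p.2)
    (hint1 : ∀ᵐ q1 ∂(volume.restrict (Set.Icc (0:ℝ) 1)),
      volume {q2 ∈ Set.Icc (0:ℝ) 1 | C q1 q2 = 1} = ENNReal.ofReal (x1 q1))
    (hint2 : ∀ᵐ q2 ∂(volume.restrict (Set.Icc (0:ℝ) 1)),
      volume {q1 ∈ Set.Icc (0:ℝ) 1 | C q1 q2 = 2} = ENNReal.ofReal (x2 q2))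
    (hmono1 : ∀ q1 q1' q2, q1 ∈ Set.Icc (0:ℝ) 1 → q1' ∈ Set.Icc (0:ℝ) 1 →
      q2 ∈ Set.Icc (0:ℝ) 1 → C q1 q2 = 1 → q1 < q1' → C q1' q2 = 1)
    (hmono2 : ∀ q1 q2 q2', q1 ∈ Set.Icc (0:ℝ) 1 → q2 ∈ Set.Icc (0:ℝ) 1 →
      q2' ∈ Set.Icc (0:ℝ) 1 → C q1 q2 = 2 → q2 < q2' → C q1 q2' = 2) :
    ∀ q ∈ Set.Icc (0:ℝ) 1, x2 (x1 q) ≤ q := by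
  intro q hq
  have ha : x1 q ∈ Set.Icc (0:ℝ) 1 := hx1maps q hq
  rcases eq_or_lt_of_le hq.2 with hq1 | hqlt1
  · -- q = 1 : trivial
    have h2 := (hx2maps _ ha).2
    exact h2.trans_eq hq1.symm
  -- threshold function s
  set S : ℝ → Set ℝ := fun q1 => {q2 | q2 ∈ Set.Icc (0:ℝ) 1 ∧ C q1 q2 = 2} ∪ {2} with hS
  set s : ℝ → ℝ := fun q1 => sInf (S q1) with hs
  have hSne : ∀ q1, (S q1).Nonempty := fun q1 => ⟨2, Or.inr rfl⟩
  have hSbdd : ∀ q1, BddBelow (S q1) := by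
    intro q1
    refine ⟨0, ?_⟩
    rintro t (⟨ht, _⟩ | ht)
    · exact ht.1
    · rw [Set.mem_singleton_iff] at ht; rw [ht]; norm_num
  have hs_nonneg : ∀ q1, 0 ≤ s q1 := by
    intro q1
    apply le_csInf (hSne q1)
    rintro t (⟨ht, _⟩ | ht)
    · exact ht.1
    · rw [Set.mem_singleton_iff] at ht; rw [ht]; norm_num
  have hs_le : ∀ q1 q2, q2 ∈ Set.Icc (0:ℝ) 1 → C q1 q2 = 2 → s q1 ≤ q2 := by
    intro q1 q2 h1 h2
    exact csInf_le (hSbdd q1) (Or.inl ⟨h1, h2⟩)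
  have hlt_s : ∀ q1 ∈ Set.Icc (0:ℝ) 1, ∀ q2 ∈ Set.Icc (0:ℝ) 1, s q1 < q2 → C q1 q2 = 2 := by
    intro q1 hq1 q2 hq2 hlt
    obtain ⟨t, htmem, htlt⟩ := exists_lt_of_csInf_lt (hSne q1) hlt
    rcases htmem with ⟨ht1, ht2⟩ | ht
    · exact hmono2 q1 t q2 hq1 ht1 hq2 ht2 htlt
    · rw [Set.mem_singleton_iff] at ht
      exfalso; rw [ht] at htlt; linarith [hq2.2]
  -- a.e. slice identity gives x1 q1 ≤ s q1
  have hx1_le_s : ∀ q1 ∈ Set.Icc (0:ℝ) 1,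
      volume {q2 ∈ Set.Icc (0:ℝ) 1 | C q1 q2 = 1} = ENNReal.ofReal (x1 q1) → x1 q1 ≤ s q1 := by
    intro q1 hq1 heq
    have hsub : {q2 ∈ Set.Icc (0:ℝ) 1 | C q1 q2 = 1} ⊆ Set.Icc 0 (s q1) := by
      rintro q2 ⟨hq2, hC1⟩
      refine ⟨hq2.1, ?_⟩
      by_contra hgt
      push_neg at hgt
      have := hlt_s q1 hq1 q2 hq2 hgt
      omega
    have hmle := measure_mono (μ := volume) hsub
    rw [heq, Real.volume_Icc, sub_zero] at hmle
    exact (ENNReal.ofReal_le_ofReal_iff (hs_nonneg q1)).mp hmle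
  -- null exceptional sets
  have hN1 : volume ({q1 | ¬ (volume {q2 ∈ Set.Icc (0:ℝ) 1 | C q1 q2 = 1}
      = ENNReal.ofReal (x1 q1))} ∩ Set.Icc 0 1) = 0 := by
    have h := hint1
    rw [ae_iff, Measure.restrict_apply' measurableSet_Icc] at h
    exact h
  have hN2 : volume ({q2 | ¬ (volume {q1 ∈ Set.Icc (0:ℝ) 1 | C q1 q2 = 2}
      = ENNReal.ofReal (x2 q2))} ∩ Set.Icc 0 1) = 0 := by
    have h := hint2
    rw [ae_iff, Measure.restrict_apply' measurableSet_Icc] at h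
    exact h
  -- main estimate: for every small δ, x2 (x1 q) < q + δ
  have key : ∀ δ : ℝ, 0 < δ → q + δ ≤ 1 → x2 (x1 q) < q + δ := by
    intro δ hδ hδ1
    have hqδ : q + δ ∈ Set.Icc (0:ℝ) 1 := ⟨by linarith [hq.1], hδ1⟩
    have hab : x1 q < x1 (q + δ) := hx1mono hq hqδ (by linarith)
    have hb1 : x1 (q + δ) ≤ 1 := (hx1maps _ hqδ).2
    -- find a good q2 in (x1 q, x1 (q+δ))
    have hgood : ∃ q2 ∈ Set.Ioo (x1 q) (x1 (q + δ)),
        volume {q1 ∈ Set.Icc (0:ℝ) 1 | C q1 q2 = 2} = ENNReal.ofReal (x2 q2) := by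
      by_contra hcon
      push_neg at hcon
      have hsub : Set.Ioo (x1 q) (x1 (q + δ)) ⊆
          {q2 | ¬ (volume {q1 ∈ Set.Icc (0:ℝ) 1 | C q1 q2 = 2}
            = ENNReal.ofReal (x2 q2))} ∩ Set.Icc 0 1 := by
        intro t ht
        exact ⟨hcon t ht, ⟨le_trans ha.1 (le_of_lt ht.1), le_trans (le_of_lt ht.2) hb1⟩⟩
      have hmle := measure_mono (μ := volume) hsub
      rw [hN2, Real.volume_Ioo] at hmle
      rw [le_zero_iff, ENNReal.ofReal_eq_zero] at hmle
      linarith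
    obtain ⟨q2, hq2mem, hq2eq⟩ := hgood
    have hq2Icc : q2 ∈ Set.Icc (0:ℝ) 1 :=
      ⟨le_trans ha.1 (le_of_lt hq2mem.1), le_trans (le_of_lt hq2mem.2) hb1⟩
    -- the C=2 slice at q2 is contained in [0, q+δ] up to a null set
    have hsub : {q1 ∈ Set.Icc (0:ℝ) 1 | C q1 q2 = 2} ⊆
        Set.Icc 0 (q + δ) ∪ ({q1 | ¬ (volume {q2 ∈ Set.Icc (0:ℝ) 1 | C q1 q2 = 1}
          = ENNReal.ofReal (x1 q1))} ∩ Set.Icc 0 1) := by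
      rintro q1 ⟨hq1Icc, hC2⟩
      by_cases hP : volume {q2 ∈ Set.Icc (0:ℝ) 1 | C q1 q2 = 1} = ENNReal.ofReal (x1 q1)
      · left
        refine ⟨hq1Icc.1, ?_⟩
        by_contra hgt
        push_neg at hgt
        have h1 : x1 q1 ≤ s q1 := hx1_le_s q1 hq1Icc hP
        have h2 : s q1 ≤ q2 := hs_le q1 q2 hq2Icc hC2
        have h3 : x1 (q + δ) < x1 q1 := hx1mono hqδ hq1Icc hgt
        linarith [hq2mem.2]
      · right; exact ⟨hP, hq1Icc⟩
    have hmle := (measure_mono (μ := volume) hsub).trans (measure_union_le _ _)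
    rw [hq2eq, Real.volume_Icc, sub_zero, hN1, add_zero] at hmle
    have hx2q2 : x2 q2 ≤ q + δ :=
      (ENNReal.ofReal_le_ofReal_iff (by linarith [hq.1])).mp hmle
    have : x2 (x1 q) < x2 q2 := hx2mono ha hq2Icc hq2mem.1
    linarith
  -- conclude
  by_contra hcon
  push_neg at hcon
  have hδpos : 0 < min (1 - q) ((x2 (x1 q) - q) / 2) := lt_min (by linarith) (by linarith)
  have h1 := key _ hδpos (by linarith [min_le_left (1 - q) ((x2 (x1 q) - q) / 2)])
  have h2 := min_le_right (1 - q) ((x2 (x1 q) - q) / 2)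
  linarith
end

section
/- Let x̂₁, x̂₂ : [0,1] → [0,1] be strictly increasing with x̂₂(x̂₁(q)) ≤ q for every q ∈ [0,1]. Then the sets W₁ = {(q₁,q₂) : q₂ < x̂₁(q₁)} and W₂ = {(q₁,q₂) : q₁ < x̂₂(q₂)} are disjoint subsets of [0,1]², W₁ is monotone in q₁ (i.e., (q₁,q₂) ∈ W₁ and q₁' ≥ q₁ implies (q₁',q₂) ∈ W₁), W₂ is monotone in q₂, and for each q₁ the Lebesgue measure of the q₂-section of W₁ equals x̂₁(q₁), while for each q₂ the measure of the q₁-section of W₂ equals x̂₂(q₂). -/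
open MeasureTheory

/-- Constructive 'if' direction of the deterministic Border theorem for two buyers:
the regions below `q₂ = x̂₁(q₁)` and to the left of `q₁ = x̂₂(q₂)` are disjoint,
monotone in the relevant coordinate, and their sections have the prescribed measures. -/
theorem deterministic_border_if
    (x1 x2 : ℝ → ℝ)
    (hx1mono : StrictMonoOn x1 (Set.Icc 0 1))
    (hx2mono : StrictMonoOn x2 (Set.Icc 0 1))
    (hx1maps : ∀ q ∈ Set.Icc (0:ℝ) 1, x1 q ∈ Set.Icc (0:ℝ) 1)
    (hx2maps : ∀ q ∈ Set.Icc (0:ℝ) 1, x2 q ∈ Set.Icc (0:ℝ) 1)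
    (hcond : ∀ q ∈ Set.Icc (0:ℝ) 1, x2 (x1 q) ≤ q)
    (W1 W2 : Set (ℝ × ℝ))
    (hW1 : W1 = {p : ℝ × ℝ | p ∈ Set.Icc (0:ℝ) 1 ×ˢ Set.Icc (0:ℝ) 1 ∧ p.2 < x1 p.1})
    (hW2 : W2 = {p : ℝ × ℝ | p ∈ Set.Icc (0:ℝ) 1 ×ˢ Set.Icc (0:ℝ) 1 ∧ p.1 < x2 p.2}) :
    Disjoint W1 W2 ∧
    W1 ⊆ Set.Icc (0:ℝ) 1 ×ˢ Set.Icc (0:ℝ) 1 ∧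
    W2 ⊆ Set.Icc (0:ℝ) 1 ×ˢ Set.Icc (0:ℝ) 1 ∧
    (∀ q1 q1' q2, (q1, q2) ∈ W1 → q1 ≤ q1' → q1' ≤ 1 → (q1', q2) ∈ W1) ∧
    (∀ q1 q2 q2', (q1, q2) ∈ W2 → q2 ≤ q2' → q2' ≤ 1 → (q1, q2') ∈ W2) ∧
    (∀ q1 ∈ Set.Icc (0:ℝ) 1, volume {q2 | (q1, q2) ∈ W1} = ENNReal.ofReal (x1 q1)) ∧
    (∀ q2 ∈ Set.Icc (0:ℝ) 1, volume {q1 | (q1, q2) ∈ W2} = ENNReal.ofReal (x2 q2)) := by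
  subst hW1 hW2
  refine ⟨?_, fun p hp => hp.1, fun p hp => hp.1, ?_, ?_, ?_, ?_⟩
  · rw [Set.disjoint_left]
    rintro ⟨q1, q2⟩ ⟨⟨hq1, hq2⟩, h1⟩ ⟨-, h2⟩
    have hx1q1 := hx1maps q1 hq1
    have : x2 q2 < x2 (x1 q1) := hx2mono hq2 hx1q1 h1
    exact absurd (lt_of_lt_of_le h2 (this.le.trans (hcond q1 hq1))) (lt_irrefl _)
  · rintro q1 q1' q2 ⟨⟨⟨h0, h1⟩, hq2⟩, hlt⟩ hle hle1
    exact ⟨⟨⟨h0.trans hle, hle1⟩, hq2⟩,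
      hlt.trans_le (hx1mono.monotoneOn ⟨h0, h1⟩ ⟨h0.trans hle, hle1⟩ hle)⟩
  · rintro q1 q2 q2' ⟨⟨hq1, ⟨h0, h1⟩⟩, hlt⟩ hle hle1
    exact ⟨⟨hq1, ⟨h0.trans hle, hle1⟩⟩,
      hlt.trans_le (hx2mono.monotoneOn ⟨h0, h1⟩ ⟨h0.trans hle, hle1⟩ hle)⟩
  · intro q1 hq1
    have hx := hx1maps q1 hq1
    have hset : {q2 | ((q1, q2) ∈ Set.Icc (0:ℝ) 1 ×ˢ Set.Icc (0:ℝ) 1) ∧ q2 < x1 q1}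
        = Set.Ico (0:ℝ) (x1 q1) := by
      ext q2
      simp only [Set.mem_setOf_eq, Set.mem_prod, Set.mem_Icc, Set.mem_Ico]
      constructor
      · rintro ⟨⟨-, h0, -⟩, hlt⟩; exact ⟨h0, hlt⟩
      · rintro ⟨h0, hlt⟩; exact ⟨⟨hq1, h0, hlt.le.trans hx.2⟩, hlt⟩
    simp only [Set.mem_setOf_eq]
    rw [hset, Real.volume_Ico, sub_zero]
  · intro q2 hq2
    have hx := hx2maps q2 hq2
    have hset : {q1 | ((q1, q2) ∈ Set.Icc (0:ℝ) 1 ×ˢ Set.Icc (0:ℝ) 1) ∧ q1 < x2 q2}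
        = Set.Ico (0:ℝ) (x2 q2) := by
      ext q1
      simp only [Set.mem_setOf_eq, Set.mem_prod, Set.mem_Icc, Set.mem_Ico]
      constructor
      · rintro ⟨⟨⟨h0, -⟩, -⟩, hlt⟩; exact ⟨h0, hlt⟩
      · rintro ⟨h0, hlt⟩; exact ⟨⟨⟨h0, hlt.le.trans hx.2⟩, hq2⟩, hlt⟩
    simp only [Set.mem_setOf_eq]
    rw [hset, Real.volume_Ico, sub_zero]
end

section
/- Let x̂₁, x̂₂ : [0,1] → [0,1] be strictly increasing, continuous, with ∫₀¹ (x̂₁(q) + x̂₂(q)) dq = 1 and x̂₂(x̂₁(q)) ≤ q for all q. Then x̂₂(x̂₁(q)) = q for all q, i.e., x̂₂ is the inverse function of x̂₁. -/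
/-!
Let `s` be the generalized inverse of `x̂₁` on `[0, 1]`, `s t = sup {q | x̂₁ q ≤ t}`. By the layer
cake formula `∫₀¹ s = 1 - ∫₀¹ x̂₁`, which is `∫₀¹ x̂₂` when the item is always sold, and
`x̂₂ (x̂₁ q) ≤ q` forces `x̂₂ ≤ s`. Hence `s - x̂₂ ≥ 0` has integral zero. If `x̂₂ (x̂₁ q) < p < q`,
then `s - x̂₂ ≥ p - x̂₂ (x̂₁ q) > 0` on `[x̂₁ p, x̂₁ q]`, an interval of positive length.
-/

open MeasureTheory intervalIntegral Set

/-- For `t < f 0` the set is empty, and the junk value `sSup ∅ = 0` is the intended one. -/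
noncomputable def genInv (f : ℝ → ℝ) (t : ℝ) : ℝ :=
  sSup {q ∈ Icc (0 : ℝ) 1 | f q ≤ t}

section GenInv

variable {f : ℝ → ℝ} {q t : ℝ}

lemma genInv_nonneg (f : ℝ → ℝ) (t : ℝ) : 0 ≤ genInv f t :=
  Real.sSup_nonneg fun _ hq => hq.1.1

lemma genInv_le_one (f : ℝ → ℝ) (t : ℝ) : genInv f t ≤ 1 :=
  Real.sSup_le (fun _ hq => hq.1.2) zero_le_one

lemma le_genInv (hq : q ∈ Icc (0 : ℝ) 1) (h : f q ≤ t) : q ≤ genInv f t :=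
  le_csSup ⟨1, fun _ hp => hp.1.2⟩ ⟨hq, h⟩

lemma lt_apply_of_genInv_lt (hq : q ∈ Icc (0 : ℝ) 1) (h : genInv f t < q) : t < f q :=
  lt_of_not_ge fun h' => (le_genInv hq h').not_gt h

lemma monotone_genInv (f : ℝ → ℝ) : Monotone (genInv f) := fun _ _ hst =>
  Real.sSup_le (fun _ hp => le_genInv hp.1 (hp.2.trans hst)) (genInv_nonneg f _)

lemma genInv_le (hf : StrictMonoOn f (Icc 0 1)) (hq : q ∈ Icc (0 : ℝ) 1) (h : t ≤ f q) :
    genInv f t ≤ q :=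
  Real.sSup_le (fun _ hp => le_of_not_gt fun hlt => (hf hq hp.1 hlt).not_ge (hp.2.trans h)) hq.1

lemma genInv_apply (hf : StrictMonoOn f (Icc 0 1)) (hq : q ∈ Icc (0 : ℝ) 1) :
    genInv f (f q) = q :=
  (genInv_le hf hq le_rfl).antisymm (le_genInv hq le_rfl)

lemma volume_inter_setOf_le (hf : StrictMonoOn f (Icc 0 1)) (t : ℝ) :
    volume ({q | t ≤ f q} ∩ Icc 0 1) = ENNReal.ofReal (1 - genInv f t) := by
  have hsub : Ioc (genInv f t) 1 ⊆ {q | t ≤ f q} ∩ Icc 0 1 := fun q hq =>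
    have hq' : q ∈ Icc (0 : ℝ) 1 := ⟨(genInv_nonneg f t).trans hq.1.le, hq.2⟩
    ⟨(lt_apply_of_genInv_lt hq' hq.1).le, hq'⟩
  have hsup : {q | t ≤ f q} ∩ Icc 0 1 ⊆ Icc (genInv f t) 1 := fun q hq =>
    ⟨genInv_le hf hq.2 hq.1, hq.2.2⟩
  refine le_antisymm ?_ ?_
  · simpa only [Real.volume_Icc] using measure_mono (μ := volume) hsup
  · simpa only [Real.volume_Ioc] using measure_mono (μ := volume) hsub

theorem integral_genInv (hf : StrictMonoOn f (Icc 0 1)) (hmaps : MapsTo f (Icc 0 1) (Icc 0 1)) :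
    ∫ t in (0 : ℝ)..1, genInv f t = 1 - ∫ q in (0 : ℝ)..1, f q := by
  have hint : Integrable f (volume.restrict (Icc (0 : ℝ) 1)) :=
    hf.monotoneOn.integrableOn_isCompact isCompact_Icc
  have layer := hint.integral_eq_integral_Ioc_meas_le (M := 1)
    (ae_restrict_of_forall_mem measurableSet_Icc fun q hq => (hmaps hq).1)
    (ae_restrict_of_forall_mem measurableSet_Icc fun q hq => (hmaps hq).2)
  have hmeas : ∀ t, (volume.restrict (Icc (0 : ℝ) 1)).real {q | t ≤ f q} = 1 - genInv f t :=
    fun t => by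
      rw [measureReal_def, Measure.restrict_apply' measurableSet_Icc, volume_inter_setOf_le hf,
        ENNReal.toReal_ofReal (sub_nonneg.2 (genInv_le_one f t))]
  have h : ∫ q in (0 : ℝ)..1, f q = ∫ t in (0 : ℝ)..1, (1 - genInv f t) := by
    rw [integral_of_le zero_le_one, integral_of_le zero_le_one,
      ← integral_Icc_eq_integral_Ioc (f := f), layer]
    simp only [hmeas]
  rw [integral_sub intervalIntegrable_const (monotone_genInv f).intervalIntegrable] at h
  simp only [intervalIntegral.integral_const, sub_zero, smul_eq_mul, mul_one] at h
  linarith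

end GenInv

lemma integral_pos_of_le_on_subinterval {h : ℝ → ℝ} {a b c d ε : ℝ} (hca : c ≤ a) (hab : a < b)
    (hbd : b ≤ d) (hε : 0 < ε) (hnonneg : ∀ x ∈ Icc c d, 0 ≤ h x) (hge : ∀ x ∈ Icc a b, ε ≤ h x)
    (hint : IntervalIntegrable h volume c d) : 0 < ∫ x in c..d, h x := by
  calc 0 < (b - a) * ε := mul_pos (sub_pos.2 hab) hε
    _ = ∫ _ in a..b, ε := by simp
    _ ≤ ∫ x in a..b, h x := by
          refine integral_mono_on hab.le intervalIntegrable_const (hint.mono_set ?_) hge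
          rw [uIcc_of_le hab.le, uIcc_of_le (hca.trans (hab.le.trans hbd))]
          exact Icc_subset_Icc hca hbd
    _ ≤ ∫ x in c..d, h x := integral_mono_interval hca hab.le hbd
          (ae_restrict_of_forall_mem measurableSet_Ioc fun x hx =>
            hnonneg x (Ioc_subset_Icc_self hx)) hint

lemma le_genInv_of_comp_le {f g : ℝ → ℝ} (hg : StrictMonoOn g (Icc 0 1))
    (hg_le : ∀ t ∈ Icc (0 : ℝ) 1, g t ≤ 1) (hf : MapsTo f (Icc 0 1) (Icc 0 1))
    (hcomp : ∀ q ∈ Icc (0 : ℝ) 1, g (f q) ≤ q) {t : ℝ} (ht : t ∈ Icc (0 : ℝ) 1) :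
    g t ≤ genInv f t := by
  by_contra! hlt
  obtain ⟨q, hq_gt, hq_lt⟩ := exists_between hlt
  have hq : q ∈ Icc (0 : ℝ) 1 := ⟨(genInv_nonneg f t).trans hq_gt.le, hq_lt.le.trans (hg_le t ht)⟩
  have hgt : g t < g (f q) := hg ht (hf hq) (lt_apply_of_genInv_lt hq hq_gt)
  exact (hgt.trans_le (hcomp q hq)).not_gt hq_lt

lemma StrictMonoOn.intervalIntegrable_unitInterval {f : ℝ → ℝ} (hf : StrictMonoOn f (Icc 0 1)) :
    IntervalIntegrable f volume 0 1 :=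
  MonotoneOn.intervalIntegrable (by rw [uIcc_of_le zero_le_one]; exact hf.monotoneOn)

theorem always_sold_implies_inverse_general
    (x1 x2 : ℝ → ℝ)
    (hx1mono : StrictMonoOn x1 (Set.Icc 0 1))
    (hx2mono : StrictMonoOn x2 (Set.Icc 0 1))
    (hx1maps : ∀ q ∈ Set.Icc (0:ℝ) 1, x1 q ∈ Set.Icc (0:ℝ) 1)
    (hx2maps : ∀ q ∈ Set.Icc (0:ℝ) 1, x2 q ∈ Set.Icc (0:ℝ) 1)
    (hsold : (∫ q in (0:ℝ)..1, (x1 q + x2 q)) = 1)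
    (hcond : ∀ q ∈ Set.Icc (0:ℝ) 1, x2 (x1 q) ≤ q) :
    ∀ q ∈ Set.Icc (0:ℝ) 1, x2 (x1 q) = q := by
  have hx2_le : ∀ t ∈ Icc (0 : ℝ) 1, x2 t ≤ genInv x1 t :=
    fun t ht => le_genInv_of_comp_le hx2mono (fun s hs => (hx2maps s hs).2) hx1maps hcond ht
  have hx2int := hx2mono.intervalIntegrable_unitInterval
  have hgap : ∫ t in (0 : ℝ)..1, (genInv x1 t - x2 t) = 0 := by
    rw [integral_add hx1mono.intervalIntegrable_unitInterval hx2int] at hsold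
    rw [integral_sub (monotone_genInv x1).intervalIntegrable hx2int,
      integral_genInv hx1mono hx1maps]
    linarith
  intro q hq
  refine (hcond q hq).antisymm (not_lt.1 fun hlt => ?_)
  obtain ⟨p, hp_gt, hp_lt⟩ := exists_between hlt
  have hp : p ∈ Icc (0 : ℝ) 1 := ⟨(hx2maps _ (hx1maps q hq)).1.trans hp_gt.le, hp_lt.le.trans hq.2⟩
  have hgap_ge : ∀ y ∈ Icc (x1 p) (x1 q), p - x2 (x1 q) ≤ genInv x1 y - x2 y := fun y hy => by
    have hy01 : y ∈ Icc (0 : ℝ) 1 := ⟨(hx1maps p hp).1.trans hy.1, hy.2.trans (hx1maps q hq).2⟩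
    have h1 : p ≤ genInv x1 y := genInv_apply hx1mono hp ▸ monotone_genInv x1 hy.1
    have h2 : x2 y ≤ x2 (x1 q) := hx2mono.monotoneOn hy01 (hx1maps q hq) hy.2
    linarith
  have hpos := integral_pos_of_le_on_subinterval (hx1maps p hp).1 (hx1mono hp hq hp_lt)
    (hx1maps q hq).2 (sub_pos.2 hp_gt) (fun y hy => sub_nonneg.2 (hx2_le y hy)) hgap_ge
    ((monotone_genInv x1).intervalIntegrable.sub hx2int)
  exact hpos.ne' hgap

/-- If the item is always sold (`∫₀¹(x̂₁ + x̂₂) = 1`) and `x̂₂(x̂₁(q)) ≤ q` for all `q`,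
then the inequality is an equality: `x̂₂` is the inverse of `x̂₁`. -/
theorem always_sold_implies_inverse
    (x1 x2 : ℝ → ℝ)
    (hx1mono : StrictMonoOn x1 (Set.Icc 0 1))
    (hx2mono : StrictMonoOn x2 (Set.Icc 0 1))
    (hx1cont : ContinuousOn x1 (Set.Icc 0 1))
    (hx2cont : ContinuousOn x2 (Set.Icc 0 1))
    (hx1maps : ∀ q ∈ Set.Icc (0:ℝ) 1, x1 q ∈ Set.Icc (0:ℝ) 1)
    (hx2maps : ∀ q ∈ Set.Icc (0:ℝ) 1, x2 q ∈ Set.Icc (0:ℝ) 1)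
    (hsold : (∫ q in (0:ℝ)..1, (x1 q + x2 q)) = 1)
    (hcond : ∀ q ∈ Set.Icc (0:ℝ) 1, x2 (x1 q) ≤ q) :
    ∀ q ∈ Set.Icc (0:ℝ) 1, x2 (x1 q) = q :=
  always_sold_implies_inverse_general x1 x2 hx1mono hx2mono hx1maps hx2maps hsold hcond
end

section
/- Under the hypotheses of the previous single-crossing lemma, additionally let φ̂ : [0,1] → ℝ be continuously differentiable with φ̂'' ≤ 0 (concave) and φ̂'(q₀) ≥ 0. Then ∫₀¹ φ̂'(q)P(q) dq ≥ ∫₀¹ φ̂'(q)P̂(q) dq. -/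
open MeasureTheory intervalIntegral

/-- Second half of the proof that piecewise auctions solve the revenue optimization:
given the single-crossing structure of `P, P̂`, the area inequality
`∫₀^{q₀}(P - P̂) ≥ ∫_{q₀}¹(P̂ - P)`, and a concave `φ̂` with `φ̂'(q₀) ≥ 0`,
the revenue term `∫ φ̂'·P` weakly dominates `∫ φ̂'·P̂`. -/
theorem single_crossing_revenue_dominance
    (P Phat : ℝ → ℝ)
    (hPconc : ConcaveOn ℝ (Set.Icc 0 1) P)
    (hPhatconc : ConcaveOn ℝ (Set.Icc 0 1) Phat)
    (hPanti : AntitoneOn P (Set.Icc 0 1))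
    (hPhatanti : AntitoneOn Phat (Set.Icc 0 1))
    (hP1 : P 1 = 0) (hPhat1 : Phat 1 = 0) (hP0 : P 0 = Phat 0)
    (q₀ : ℝ) (hq₀ : q₀ ∈ Set.Icc (0:ℝ) 1)
    (hcross1 : ∀ q ∈ Set.Icc (0:ℝ) q₀, Phat q ≤ P q)
    (hcross2 : ∀ q ∈ Set.Icc q₀ 1, P q ≤ Phat q)
    (harea : (∫ q in (0:ℝ)..q₀, (P q - Phat q)) ≥ ∫ q in q₀..1, (Phat q - P q))
    (φh φd : ℝ → ℝ)
    (hφ : ∀ q ∈ Set.Icc (0:ℝ) 1, HasDerivAt φh (φd q) q)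
    (hφdcont : ContinuousOn φd (Set.Icc 0 1))
    (hφdanti : AntitoneOn φd (Set.Icc 0 1))
    (hφdq₀ : 0 ≤ φd q₀) :
    (∫ q in (0:ℝ)..1, φd q * P q) ≥ ∫ q in (0:ℝ)..1, φd q * Phat q := by

  obtain ⟨hq0, hq1⟩ := hq₀
  have h01 : (0:ℝ) ≤ 1 := zero_le_one
  have hu1 : Set.uIcc (0:ℝ) q₀ ⊆ Set.Icc 0 1 := by
    rw [Set.uIcc_of_le hq0]; exact Set.Icc_subset_Icc le_rfl hq1
  have hu2 : Set.uIcc q₀ (1:ℝ) ⊆ Set.Icc 0 1 := by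
    rw [Set.uIcc_of_le hq1]; exact Set.Icc_subset_Icc hq0 le_rfl
  have hu3 : Set.uIcc (0:ℝ) 1 ⊆ Set.Icc 0 1 := by
    rw [Set.uIcc_of_le h01]
  -- integrability
  have intP : ∀ {a b : ℝ}, Set.uIcc a b ⊆ Set.Icc 0 1 →
      IntervalIntegrable P volume a b := fun h => (hPanti.mono h).intervalIntegrable
  have intPh : ∀ {a b : ℝ}, Set.uIcc a b ⊆ Set.Icc 0 1 →
      IntervalIntegrable Phat volume a b := fun h => (hPhatanti.mono h).intervalIntegrable
  have intfP : ∀ {a b : ℝ}, Set.uIcc a b ⊆ Set.Icc 0 1 →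
      IntervalIntegrable (fun q => φd q * P q) volume a b := fun h =>
    (intP h).continuousOn_mul (hφdcont.mono h)
  have intfPh : ∀ {a b : ℝ}, Set.uIcc a b ⊆ Set.Icc 0 1 →
      IntervalIntegrable (fun q => φd q * Phat q) volume a b := fun h =>
    (intPh h).continuousOn_mul (hφdcont.mono h)
  have intD : ∀ {a b : ℝ}, Set.uIcc a b ⊆ Set.Icc 0 1 →
      IntervalIntegrable (fun q => P q - Phat q) volume a b := fun h =>
    (intP h).sub (intPh h)
  have intf : ∀ {a b : ℝ}, Set.uIcc a b ⊆ Set.Icc 0 1 →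
      IntervalIntegrable (fun q => φd q * (P q - Phat q)) volume a b := fun h =>
    (intD h).continuousOn_mul (hφdcont.mono h)
  set A : ℝ := ∫ q in (0:ℝ)..q₀, (P q - Phat q) with hA
  set B : ℝ := ∫ q in q₀..1, (Phat q - P q) with hB
  have hBnn : 0 ≤ B := by
    apply intervalIntegral.integral_nonneg hq1
    intro q hq
    exact sub_nonneg.2 (hcross2 q hq)
  -- first piece
  have h1 : φd q₀ * A ≤ ∫ q in (0:ℝ)..q₀, φd q * (P q - Phat q) := by
    rw [hA, ← intervalIntegral.integral_const_mul]
    apply intervalIntegral.integral_mono_on hq0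
      ((intD hu1).const_mul _) (intf hu1)
    intro q hq
    have hqI : q ∈ Set.Icc (0:ℝ) 1 := ⟨hq.1, hq.2.trans hq1⟩
    have hq₀I : q₀ ∈ Set.Icc (0:ℝ) 1 := ⟨hq0, hq1⟩
    exact mul_le_mul_of_nonneg_right (hφdanti hqI hq₀I hq.2)
      (sub_nonneg.2 (hcross1 q hq))
  -- second piece
  have h2 : (∫ q in q₀..1, φd q * (Phat q - P q)) ≤ φd q₀ * B := by
    rw [hB, ← intervalIntegral.integral_const_mul]
    apply intervalIntegral.integral_mono_on hq1
      (((intPh hu2).sub (intP hu2)).continuousOn_mul (hφdcont.mono hu2))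
      (((intPh hu2).sub (intP hu2)).const_mul _)
    intro q hq
    have hqI : q ∈ Set.Icc (0:ℝ) 1 := ⟨hq0.trans hq.1, hq.2⟩
    have hq₀I : q₀ ∈ Set.Icc (0:ℝ) 1 := ⟨hq0, hq1⟩
    exact mul_le_mul_of_nonneg_right (hφdanti hq₀I hqI hq.1)
      (sub_nonneg.2 (hcross2 q hq))
  have h2' : -(φd q₀ * B) ≤ ∫ q in q₀..1, φd q * (P q - Phat q) := by
    have : (∫ q in q₀..1, φd q * (P q - Phat q))
        = -∫ q in q₀..1, φd q * (Phat q - P q) := by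
      rw [← intervalIntegral.integral_neg]
      congr 1
      funext q
      ring
    rw [this]
    exact neg_le_neg h2
  have hsplit : (∫ q in (0:ℝ)..1, φd q * (P q - Phat q))
      = (∫ q in (0:ℝ)..q₀, φd q * (P q - Phat q))
        + ∫ q in q₀..1, φd q * (P q - Phat q) :=
    (intervalIntegral.integral_add_adjacent_intervals (intf hu1) (intf hu2)).symm
  have hmain : 0 ≤ ∫ q in (0:ℝ)..1, φd q * (P q - Phat q) := by
    rw [hsplit]
    have : 0 ≤ φd q₀ * A + -(φd q₀ * B) := by
      have : φd q₀ * B ≤ φd q₀ * A := mul_le_mul_of_nonneg_left harea hφdq₀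
      linarith
    linarith [h1, h2']
  have hfinal : (∫ q in (0:ℝ)..1, φd q * P q) - (∫ q in (0:ℝ)..1, φd q * Phat q)
      = ∫ q in (0:ℝ)..1, φd q * (P q - Phat q) := by
    rw [← intervalIntegral.integral_sub (intfP hu3) (intfPh hu3)]
    congr 1
    funext q
    ring
  linarith [hmain, hfinal.ge]
end

section
/- Let n ≥ 2 and 0 ≤ r₁ < r₂ ≤ 1, k ∈ [0, (r₂ⁿ - r₁ⁿ)/(n(r₂ - r₁))]. Define P : [0,1] → ℝ by P(q) = k(r₂ - r₁) + (1 - r₂ⁿ)/n for q ∈ [0, r₁], P(q) = k(r₂ - q) + (1 - r₂ⁿ)/n for q ∈ (r₁, r₂], and P(q) = (1 - qⁿ)/n for q ∈ (r₂, 1]. Then P is nonincreasing, concave, satisfies P(1) = 0, and P(q) ≤ (1 - qⁿ)/n for all q ∈ [0,1]. -/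
open Finset in
lemma pow_sub_pow_bounds_aux (n : ℕ) {a b : ℝ} (ha : 0 ≤ a) (hab : a ≤ b) :
    (n : ℝ) * a ^ (n - 1) * (b - a) ≤ b ^ n - a ^ n ∧
    b ^ n - a ^ n ≤ (n : ℝ) * b ^ (n - 1) * (b - a) := by
  have hb : 0 ≤ b := ha.trans hab
  have hgs := geom_sum₂_mul b a n
  have hterm : ∀ i ∈ range n,
      a ^ (n - 1) ≤ b ^ i * a ^ (n - 1 - i) ∧ b ^ i * a ^ (n - 1 - i) ≤ b ^ (n - 1) := by
    intro i hi
    have hi' : i < n := mem_range.1 hi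
    have h1 : i + (n - 1 - i) = n - 1 := by omega
    constructor
    · calc a ^ (n - 1) = a ^ i * a ^ (n - 1 - i) := by rw [← pow_add, h1]
        _ ≤ b ^ i * a ^ (n - 1 - i) :=
          mul_le_mul_of_nonneg_right (pow_le_pow_left₀ ha hab i) (pow_nonneg ha _)
    · calc b ^ i * a ^ (n - 1 - i) ≤ b ^ i * b ^ (n - 1 - i) :=
          mul_le_mul_of_nonneg_left (pow_le_pow_left₀ ha hab _) (pow_nonneg hb _)
        _ = b ^ (n - 1) := by rw [← pow_add, h1]
  have hlow : (n : ℝ) * a ^ (n - 1) ≤ ∑ i ∈ range n, b ^ i * a ^ (n - 1 - i) := by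
    calc (n : ℝ) * a ^ (n - 1) = ∑ _i ∈ range n, a ^ (n - 1) := by
          rw [Finset.sum_const, card_range, nsmul_eq_mul]
      _ ≤ _ := Finset.sum_le_sum fun i hi => (hterm i hi).1
  have hupp : (∑ i ∈ range n, b ^ i * a ^ (n - 1 - i)) ≤ (n : ℝ) * b ^ (n - 1) := by
    calc (∑ i ∈ range n, b ^ i * a ^ (n - 1 - i)) ≤ ∑ _i ∈ range n, b ^ (n - 1) :=
          Finset.sum_le_sum fun i hi => (hterm i hi).2
      _ = (n : ℝ) * b ^ (n - 1) := by rw [Finset.sum_const, card_range, nsmul_eq_mul]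
  have hba : 0 ≤ b - a := sub_nonneg.2 hab
  constructor
  · calc (n : ℝ) * a ^ (n - 1) * (b - a)
        ≤ (∑ i ∈ range n, b ^ i * a ^ (n - 1 - i)) * (b - a) :=
          mul_le_mul_of_nonneg_right hlow hba
      _ = b ^ n - a ^ n := hgs
  · calc b ^ n - a ^ n = (∑ i ∈ range n, b ^ i * a ^ (n - 1 - i)) * (b - a) := hgs.symm
      _ ≤ (n : ℝ) * b ^ (n - 1) * (b - a) := mul_le_mul_of_nonneg_right hupp hba

/-- Condition 1 piecewise auctions are feasible: the function
`P(q) = ∫_q¹ x̂` built from the piecewise allocation is nonincreasing, concave,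
vanishes at `1`, and satisfies the symmetric Border bound `P(q) ≤ (1 - qⁿ)/n`. -/
theorem piecewise_condition1_feasible
    (n : ℕ) (hn : 2 ≤ n) (r₁ r₂ k : ℝ)
    (h0 : 0 ≤ r₁) (h12 : r₁ < r₂) (h21 : r₂ ≤ 1)
    (hk0 : 0 ≤ k) (hk1 : k ≤ (r₂ ^ n - r₁ ^ n) / (n * (r₂ - r₁)))
    (P : ℝ → ℝ)
    (hP : P = fun q =>
      if q ≤ r₁ then k * (r₂ - r₁) + (1 - r₂ ^ n) / n
      else if q ≤ r₂ then k * (r₂ - q) + (1 - r₂ ^ n) / n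
      else (1 - q ^ n) / n) :
    AntitoneOn P (Set.Icc 0 1) ∧
    ConcaveOn ℝ (Set.Icc 0 1) P ∧
    P 1 = 0 ∧
    (∀ q ∈ Set.Icc (0:ℝ) 1, P q ≤ (1 - q ^ n) / n) := by
  have hn0 : (0:ℝ) < n := by positivity
  set g : ℝ → ℝ := fun q => (1 - q ^ n) / n with hg
  set L : ℝ → ℝ := fun q => k * (r₂ - q) + (1 - r₂ ^ n) / n with hL
  set C : ℝ := k * (r₂ - r₁) + (1 - r₂ ^ n) / n with hC
  set F : ℝ → ℝ := fun q => min (min C (L q)) (g q) with hF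
  -- basic derived inequality
  have hnk : (n : ℝ) * k * (r₂ - r₁) ≤ r₂ ^ n - r₁ ^ n := by
    have hd : 0 < (n : ℝ) * (r₂ - r₁) := by
      have := sub_pos.2 h12; positivity
    have := (le_div_iff₀ hd).1 hk1
    nlinarith
  -- L ≤ g on [r₁, r₂]
  have hLleG : ∀ q, r₁ ≤ q → q ≤ r₂ → L q ≤ g q := by
    intro q hq1 hq2
    have hq0 : 0 ≤ q := h0.trans hq1
    have hb1 := (pow_sub_pow_bounds_aux n hq0 hq2).1
    have hb2 := (pow_sub_pow_bounds_aux n h0 hq1).2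
    -- key: n k (r₂ - q) ≤ r₂^n - q^n
    have key : (n : ℝ) * k * (r₂ - q) ≤ r₂ ^ n - q ^ n := by
      nlinarith [mul_le_mul_of_nonneg_right hnk (sub_nonneg.2 hq2),
        mul_le_mul_of_nonneg_right hb1 (sub_nonneg.2 hq1),
        mul_le_mul_of_nonneg_right hb2 (sub_nonneg.2 hq2),
        sub_pos.2 h12, sub_nonneg.2 hq1, sub_nonneg.2 hq2]
    have h' : k * (r₂ - q) ≤ (r₂ ^ n - q ^ n) / n :=
      (le_div_iff₀ hn0).2 (by nlinarith)
    have he : (1 - q ^ n) / (n:ℝ) - (1 - r₂ ^ n) / n = (r₂ ^ n - q ^ n) / n := by ring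
    simp only [hL, hg]
    linarith
  -- k ≤ r₂ ^ (n-1)
  have hkr : k ≤ r₂ ^ (n - 1) := by
    have hb2 := (pow_sub_pow_bounds_aux n h0 h12.le).2
    have h12' := sub_pos.2 h12
    nlinarith [mul_pos hn0 h12']
  -- g ≤ L on [r₂, ∞)
  have hGleL : ∀ q, r₂ ≤ q → g q ≤ L q := by
    intro q hq
    have hr0 : 0 ≤ r₂ := h0.trans h12.le
    have hb1 := (pow_sub_pow_bounds_aux n hr0 hq).1
    have key : r₂ ^ n - q ^ n ≤ (n : ℝ) * k * (r₂ - q) := by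
      nlinarith [mul_le_mul_of_nonneg_right hkr (mul_nonneg hn0.le (sub_nonneg.2 hq))]
    have h' : (r₂ ^ n - q ^ n) / (n:ℝ) ≤ k * (r₂ - q) :=
      (div_le_iff₀ hn0).2 (by nlinarith)
    have he : (1 - q ^ n) / (n:ℝ) - (1 - r₂ ^ n) / n = (r₂ ^ n - q ^ n) / n := by ring
    simp only [hL, hg]
    linarith
  -- C ≤ g r₁ and monotonicity pieces
  have hCleGr : C ≤ g r₁ := by
    have h' : k * (r₂ - r₁) ≤ (r₂ ^ n - r₁ ^ n) / n :=
      (le_div_iff₀ hn0).2 (by nlinarith)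
    have he : (1 - r₁ ^ n) / (n:ℝ) - (1 - r₂ ^ n) / n = (r₂ ^ n - r₁ ^ n) / n := by ring
    simp only [hC, hg]
    linarith
  have hganti : AntitoneOn g (Set.Icc 0 1) := by
    intro x hx y hy hxy
    simp only [hg]
    have : x ^ n ≤ y ^ n := pow_le_pow_left₀ hx.1 hxy n
    gcongr
  have hLanti : ∀ x y : ℝ, x ≤ y → L y ≤ L x := by
    intro x y hxy
    simp only [hL]
    nlinarith [mul_le_mul_of_nonneg_left (sub_le_sub_left hxy r₂) hk0]
  have hr₂0 : 0 ≤ r₂ := h0.trans h12.le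
  have hr₁I : r₁ ∈ Set.Icc (0:ℝ) 1 := ⟨h0, by linarith⟩
  -- P agrees with F on [0,1]
  have hPF : Set.EqOn F P (Set.Icc 0 1) := by
    intro q hq
    rw [hP]
    simp only [hF]
    by_cases h1 : q ≤ r₁
    · rw [if_pos h1]
      have hCL : C ≤ L q := by
        simp only [hC, hL]
        nlinarith [mul_le_mul_of_nonneg_left (sub_le_sub_left h1 r₂) hk0]
      have hCg : C ≤ g q := hCleGr.trans (hganti hq hr₁I h1)
      rw [min_eq_left hCL, min_eq_left hCg]
    · rw [if_neg h1]
      push_neg at h1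
      by_cases h2 : q ≤ r₂
      · rw [if_pos h2]
        have hLC : L q ≤ C := hLanti r₁ q h1.le
        have hLg : L q ≤ g q := hLleG q h1.le h2
        rw [min_eq_right hLC, min_eq_left hLg]
      · rw [if_neg h2]
        push_neg at h2
        have hgL : g q ≤ L q := hGleL q h2.le
        have hgC : g q ≤ C := hgL.trans (hLanti r₁ q (h12.trans h2).le)
        exact min_eq_right (le_min hgC hgL)
  have hFanti : AntitoneOn F (Set.Icc 0 1) := by
    intro x hx y hy hxy
    exact min_le_min (min_le_min le_rfl (hLanti x y hxy)) (hganti hx hy hxy)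
  refine ⟨fun x hx y hy hxy => ?_, ?_, ?_, fun q hq => ?_⟩
  · rw [← hPF hx, ← hPF hy]; exact hFanti hx hy hxy
  · -- concavity
    have hpow : ConvexOn ℝ (Set.Icc (0:ℝ) 1) (fun q : ℝ => q ^ n) :=
      (convexOn_pow n).subset Set.Icc_subset_Ici_self (convex_Icc _ _)
    have hgconc : ConcaveOn ℝ (Set.Icc (0:ℝ) 1) g := by
      have h1 : ConcaveOn ℝ (Set.Icc (0:ℝ) 1)
          ((1/(n:ℝ)) • fun q : ℝ => -(q ^ n) + 1) :=
        ((hpow.neg.add_const 1).smul (by positivity))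
      refine h1.congr fun x hx => ?_
      simp only [Pi.smul_apply, smul_eq_mul, hg]
      ring
    have hLconc : ConcaveOn ℝ (Set.Icc (0:ℝ) 1) L := by
      refine ⟨convex_Icc _ _, fun x hx y hy a b ha hb hab => ?_⟩
      simp only [hL, smul_eq_mul]
      apply le_of_eq
      linear_combination (k * r₂ + (1 - r₂ ^ n) / (n:ℝ)) * hab
    have hFconc : ConcaveOn ℝ (Set.Icc (0:ℝ) 1) F :=
      ((concaveOn_const C (convex_Icc _ _)).inf hLconc).inf hgconc
    exact hFconc.congr hPF
  · rw [hP]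
    simp only
    have hn1 : ¬ ((1:ℝ) ≤ r₁) := by push_neg; linarith
    rw [if_neg hn1]
    by_cases h2 : (1:ℝ) ≤ r₂
    · have hr2 : r₂ = 1 := le_antisymm h21 h2
      rw [if_pos h2, hr2]
      simp
    · rw [if_neg h2]
      simp
  · rw [← hPF hq]
    exact min_le_right _ _
end

section
/- Let 0 ≤ r₁ < r₂ ≤ 1 and n ≥ 2, and define the deterministic allocation on quantile profiles (q₁,…,qₙ) ∈ [0,1]ⁿ: buyer j wins iff j is the smallest index attaining max{qᵢ : qᵢ > r₂} when that set is nonempty; if no qᵢ > r₂ and some qᵢ ∈ [r₁, r₂], the smallest-index maximal such buyer wins; otherwise no one wins. Then each buyer's induced interim allocation (against i.i.d. uniform quantiles of opponents) is x̂ᵢ(q) = 0 for q < r₁, x̂ᵢ(q) = q^{n-1} for r₁ ≤ q ≤ r₂, and ∑ᵢ x̂ᵢ(q) = (1 - r₂ⁿ)/(1 - r₂) for q > r₂ (namely x̂ᵢ(q) = r₂^{i-1} for q > r₂). -/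
/-!
Fix buyer `i` at quantile `q`. In each regime of `q` the event that `i` wins is a box in the
opponents' quantiles: above `r₂` it is `{vⱼ ≤ r₂ for j < i}`; on `[r₁, r₂]` it is
`{vⱼ < q for j < i, vⱼ ≤ q for j > i}`, the tie-break costing only a null set. Under the
product of uniform measures a box has probability the product of its side lengths, giving
`r₂ ^ i` and `q ^ (n - 1)`; summing the former over `i` is a geometric series.
-/

open MeasureTheory

/-- Buyer `i` wins under the hierarchical deterministic rule for Condition 2
piecewise auctions: if some quantile exceeds `r₂`, the smallest such index wins;
otherwise, if some quantile lies in `[r₁, r₂]`, the smallest-index maximal such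
buyer wins; otherwise no one wins. -/
def winsRule (n : ℕ) (r₁ r₂ : ℝ) (q : Fin n → ℝ) (i : Fin n) : Prop :=
  (r₂ < q i ∧ ∀ j, j < i → q j ≤ r₂) ∨
  ((∀ j, q j ≤ r₂) ∧ r₁ ≤ q i ∧
    ∀ j, j ≠ i → r₁ ≤ q j → (q j < q i ∨ (q j = q i ∧ i < j)))

open Classical in
/-- Interim allocation of buyer `i` at own quantile `q`, with the other buyers'
quantiles i.i.d. uniform on `[0,1]`. -/
noncomputable def interimAlloc (n : ℕ) (r₁ r₂ : ℝ) (i : Fin n) (q : ℝ) : ℝ :=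
  ∫ v, (if winsRule n r₁ r₂ (Function.update v i q) i then (1:ℝ) else 0)
    ∂(Measure.pi fun _ : Fin n => volume.restrict (Set.Icc (0:ℝ) 1))

open Set Function

section Uniform

variable {a b q : ℝ}

lemma measureReal_restrict_Icc_Iic (haq : a ≤ q) (hqb : q ≤ b) :
    (volume.restrict (Icc a b)).real (Iic q) = q - a := by
  have hinter : Iic q ∩ Icc a b = Icc a q := by
    ext x
    simp only [mem_inter_iff, mem_Iic, mem_Icc]
    grind
  rw [measureReal_restrict_apply measurableSet_Iic, hinter, Real.volume_real_Icc_of_le haq]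

lemma measureReal_restrict_Icc_Iio (haq : a ≤ q) (hqb : q ≤ b) :
    (volume.restrict (Icc a b)).real (Iio q) = q - a := by
  rw [← measureReal_restrict_Icc_Iic haq hqb]
  exact measureReal_congr (Iio_ae_eq_Iic.restrict)

end Uniform

section Rule

variable {n : ℕ} {r₁ r₂ : ℝ} {w : Fin n → ℝ} {i : Fin n}

lemma winsRule.le_apply (h12 : r₁ ≤ r₂) (hw : winsRule n r₁ r₂ w i) : r₁ ≤ w i := by
  rcases hw with ⟨hi, -⟩ | ⟨-, hi, -⟩
  exacts [h12.trans hi.le, hi]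

lemma winsRule_iff_of_lt_apply (hi : r₂ < w i) :
    winsRule n r₁ r₂ w i ↔ ∀ j < i, w j ≤ r₂ := by
  refine ⟨?_, fun h => Or.inl ⟨hi, h⟩⟩
  rintro (⟨-, h⟩ | ⟨hall, -⟩)
  · exact h
  · exact absurd (hall i) hi.not_ge

lemma winsRule_iff_of_mem_Icc (hi : w i ∈ Icc r₁ r₂) :
    winsRule n r₁ r₂ w i ↔ ∀ j, (j < i → w j < w i) ∧ (i < j → w j ≤ w i) := by
  obtain ⟨h₁, h₂⟩ := hi
  constructor
  · rintro (⟨hlt, -⟩ | ⟨-, -, hmax⟩)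
    · exact absurd h₂ hlt.not_ge
    intro j
    by_cases hr : r₁ ≤ w j <;> grind
  · intro h
    refine Or.inr ⟨fun j => ?_, h₁, fun j hji _ => ?_⟩
    · rcases lt_trichotomy j i with hji | rfl | hij
      exacts [((h j).1 hji).le.trans h₂, h₂, ((h j).2 hij).trans h₂]
    · grind

variable {q : ℝ}

lemma setOf_winsRule_update_of_lt (hq : r₂ < q) :
    {v | winsRule n r₁ r₂ (update v i q) i} = univ.pi fun j => if j < i then Iic r₂ else univ := by
  ext v
  rw [mem_univ_pi, mem_ofPred, winsRule_iff_of_lt_apply (by rwa [update_self])]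
  refine forall_congr' fun j => ?_
  split_ifs with hji
  · simp [update_of_ne hji.ne, hji]
  · simp [hji]

lemma setOf_winsRule_update_of_mem_Icc (hq : q ∈ Icc r₁ r₂) :
    {v | winsRule n r₁ r₂ (update v i q) i} =
      univ.pi fun j => if j < i then Iio q else if i < j then Iic q else univ := by
  ext v
  rw [mem_univ_pi, mem_ofPred, winsRule_iff_of_mem_Icc (by rwa [update_self]), update_self]
  refine forall_congr' fun j => ?_
  split_ifs with hji hij
  · simp [update_of_ne hji.ne, hji, hji.not_gt]
  · simp [update_of_ne hij.ne', hij, hji]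
  · simp [hji, hij]

end Rule

section Interim

variable {n : ℕ} {r₁ r₂ q : ℝ} {i : Fin n}

lemma interimAlloc_eq_prod {s : Fin n → Set ℝ} (hs : ∀ j, MeasurableSet (s j))
    (hbox : {v | winsRule n r₁ r₂ (update v i q) i} = univ.pi s) :
    interimAlloc n r₁ r₂ i q = ∏ j, (volume.restrict (Icc (0:ℝ) 1)).real (s j) := by
  classical
  have hind : (fun v => if winsRule n r₁ r₂ (update v i q) i then (1:ℝ) else 0) =
      (univ.pi s).indicator 1 := by
    ext v
    rw [← hbox, indicator_apply]
    rfl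
  rw [interimAlloc, hind, integral_indicator_one (.univ_pi hs), measureReal_def, Measure.pi_pi,
    ENNReal.toReal_prod]
  rfl

lemma interimAlloc_eq_zero (h12 : r₁ ≤ r₂) (hq : q < r₁) : interimAlloc n r₁ r₂ i q = 0 := by
  have hlose : ∀ v, ¬ winsRule n r₁ r₂ (update v i q) i := fun v hw =>
    (hw.le_apply h12).not_gt (by simpa using hq)
  simp [interimAlloc, hlose]

lemma interimAlloc_eq_pow_sub_one (hq0 : 0 ≤ q) (hq : q ∈ Icc r₁ r₂) (h21 : r₂ ≤ 1) :
    interimAlloc n r₁ r₂ i q = q ^ (n - 1) := by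
  have hq1 : q ≤ 1 := hq.2.trans h21
  rw [interimAlloc_eq_prod (fun j => by split_ifs <;> measurability)
    (setOf_winsRule_update_of_mem_Icc hq), Fintype.prod_eq_mul_prod_compl i]
  have hside : ∀ j ∈ ({i}ᶜ : Finset (Fin n)), (volume.restrict (Icc (0:ℝ) 1)).real
      (if j < i then Iio q else if i < j then Iic q else univ) = q := by
    intro j hj
    have hji : j ≠ i := by simpa using hj
    rcases hji.lt_or_gt with hji | hij
    · simp [hji, measureReal_restrict_Icc_Iio hq0 hq1]
    · simp [hij, hij.not_gt, measureReal_restrict_Icc_Iic hq0 hq1]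
  rw [Finset.prod_congr rfl hside, Finset.prod_const, Finset.card_compl, Finset.card_singleton,
    Fintype.card_fin]
  simp [Real.volume_real_Icc_of_le zero_le_one]

lemma interimAlloc_eq_pow_index (h0 : 0 ≤ r₂) (h21 : r₂ ≤ 1) (hq : r₂ < q) :
    interimAlloc n r₁ r₂ i q = r₂ ^ (i : ℕ) := by
  rw [interimAlloc_eq_prod (fun j => by split_ifs <;> measurability)
    (setOf_winsRule_update_of_lt hq)]
  simp only [apply_ite, measureReal_restrict_Icc_Iic h0 h21, measureReal_restrict_apply_univ,
    Real.volume_real_Icc_of_le zero_le_one, sub_zero, Finset.prod_ite, Finset.prod_const_one,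
    mul_one, Finset.prod_const, Finset.filter_gt_eq_Iio, Fin.card_Iio]

end Interim

theorem condition2_deterministic_implementation_general
    (n : ℕ) (r₁ r₂ : ℝ)
    (h0 : 0 ≤ r₁) (h12 : r₁ < r₂) (h21 : r₂ ≤ 1) :
    (∀ i : Fin n, ∀ q ∈ Set.Icc (0:ℝ) 1,
      (q < r₁ → interimAlloc n r₁ r₂ i q = 0) ∧
      (r₁ ≤ q → q ≤ r₂ → interimAlloc n r₁ r₂ i q = q ^ (n - 1)) ∧
      (r₂ < q → interimAlloc n r₁ r₂ i q = r₂ ^ (i : ℕ))) ∧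
    (∀ q ∈ Set.Icc (0:ℝ) 1, r₂ < q →
      (∑ i : Fin n, interimAlloc n r₁ r₂ i q) = (1 - r₂ ^ n) / (1 - r₂)) := by
  have hr₂ : 0 ≤ r₂ := h0.trans h12.le
  refine ⟨fun i q hq => ⟨interimAlloc_eq_zero h12.le,
    fun h₁ h₂ => interimAlloc_eq_pow_sub_one hq.1 ⟨h₁, h₂⟩ h21,
    interimAlloc_eq_pow_index hr₂ h21⟩, fun q hq hlt => ?_⟩
  have hne : r₂ ≠ 1 := (hlt.trans_le hq.2).ne
  rw [Finset.sum_congr rfl fun i _ => interimAlloc_eq_pow_index hr₂ h21 hlt,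
    Fin.sum_univ_eq_sum_range (r₂ ^ ·), Finset.range_eq_Ico, geom_sum_Ico' hne (Nat.zero_le n),
    pow_zero]

/-- Deterministic implementation of Condition 2 piecewise auctions: the induced
interim allocations are `0` below `r₁`, `q^{n-1}` on `[r₁, r₂]`, and `r₂^{i-1}`
above `r₂`, summing there to `(1 - r₂ⁿ)/(1 - r₂)`. -/
theorem condition2_deterministic_implementation
    (n : ℕ) (hn : 2 ≤ n) (r₁ r₂ : ℝ)
    (h0 : 0 ≤ r₁) (h12 : r₁ < r₂) (h21 : r₂ ≤ 1) :
    (∀ i : Fin n, ∀ q ∈ Set.Icc (0:ℝ) 1,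
      (q < r₁ → interimAlloc n r₁ r₂ i q = 0) ∧
      (r₁ ≤ q → q ≤ r₂ → interimAlloc n r₁ r₂ i q = q ^ (n - 1)) ∧
      (r₂ < q → interimAlloc n r₁ r₂ i q = r₂ ^ (i : ℕ))) ∧
    (∀ q ∈ Set.Icc (0:ℝ) 1, r₂ < q →
      (∑ i : Fin n, interimAlloc n r₁ r₂ i q) = (1 - r₂ ^ n) / (1 - r₂)) :=
  condition2_deterministic_implementation_general n r₁ r₂ h0 h12 h21
end
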